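/- Let D = {−1,1}^n with n ≥ 2, and let F ⊆ D be a fraction whose indicator function f = Σ_a θ_a x^a satisfies θ_a = 0 for all a with 1 ≤ Σ_j a_j ≤ 2 (all degree-1 and degree-2 coefficients vanish). Then F is an orthogonal design of strength 2: for every pair j ≠ k, each of the four level combinations (−1,−1), (−1,1), (1,−1), (1,1) appears in exactly |F|/4 points of F. -/

import Mathlib

open MvPolynomial Finset

/-!
Evaluating the indicator function on `{-1,1}ⁿ` and using the orthogonality of the monomials
`x^a` there gives `Σ_{d ∈ F} d^a = 2ⁿ θ_a`. Hence the moments `Σ d_j`, `Σ d_k` and `Σ d_j d_k`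
over `F` vanish. Since `(1 + ε d_j)(1 + δ d_k)` is `4` when `(d_j, d_k) = (ε, δ)` and `0`
otherwise, summing it over `F` counts those points as `|F| / 4`.
-/

/-- The square-free polynomial `Σ_{a ∈ {0,1}ⁿ} θ_a x^a` on two-level factors. -/
noncomputable def tlPoly (n : ℕ) (θ : (Fin n → Fin 2) → ℚ) : MvPolynomial (Fin n) ℚ :=
  ∑ a : Fin n → Fin 2, C (θ a) * ∏ j, X j ^ (a j : ℕ)

def signCube (R : Type*) [CommRing R] [DecidableEq R] (n : ℕ) : Finset (Fin n → R) :=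
  Fintype.piFinset fun _ => {-1, 1}

section SignCube

variable {R : Type*} [CommRing R] [DecidableEq R]

@[simp]
theorem mem_signCube {n : ℕ} {d : Fin n → R} : d ∈ signCube R n ↔ ∀ j, d j = -1 ∨ d j = 1 := by
  simp [signCube]

theorem sum_neg_one_one_pow (h : (-1 : R) ≠ 1) (m : ℕ) :
    ∑ x ∈ ({-1, 1} : Finset R), x ^ m = if Even m then 2 else 0 := by
  rw [sum_pair h, one_pow]
  rcases Nat.even_or_odd m with hm | hm
  · rw [hm.neg_one_pow, if_pos hm, one_add_one_eq_two]
  · rw [hm.neg_one_pow, if_neg (Nat.not_even_iff_odd.mpr hm), neg_add_cancel]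

theorem even_val_add_val_iff (x y : Fin 2) : Even ((x : ℕ) + y) ↔ x = y := by
  decide +revert

theorem sum_signCube_monomial_mul_monomial {n : ℕ} (h : (-1 : R) ≠ 1) (a b : Fin n → Fin 2) :
    ∑ d ∈ signCube R n, (∏ j, d j ^ (a j : ℕ)) * ∏ j, d j ^ (b j : ℕ) =
      if a = b then 2 ^ n else 0 := by
  simp_rw [← prod_mul_distrib, ← pow_add]
  rw [signCube, sum_prod_piFinset _ fun j x => x ^ ((a j : ℕ) + b j)]
  simp_rw [sum_neg_one_one_pow h, even_val_add_val_iff]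
  rw [Fintype.prod_ite_zero, prod_const, card_univ, Fintype.card_fin]
  congr 1
  exact propext funext_iff.symm

end SignCube

theorem eval_tlPoly {n : ℕ} (θ : (Fin n → Fin 2) → ℚ) (d : Fin n → ℚ) :
    eval d (tlPoly n θ) = ∑ a, θ a * ∏ j, d j ^ (a j : ℕ) := by
  simp [tlPoly]

theorem sum_monomial_eq_two_pow_mul {n : ℕ} (F : Finset (Fin n → ℚ))
    (hF : ∀ d ∈ F, ∀ j, d j = -1 ∨ d j = 1) (θ : (Fin n → Fin 2) → ℚ)
    (hθ : ∀ d : Fin n → ℚ, (∀ j, d j = -1 ∨ d j = 1) →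
      eval d (tlPoly n θ) = if d ∈ F then 1 else 0)
    (a : Fin n → Fin 2) :
    ∑ d ∈ F, ∏ j, d j ^ (a j : ℕ) = 2 ^ n * θ a := by
  have hFcube : F ⊆ signCube ℚ n := fun d hd => mem_signCube.2 (hF d hd)
  calc ∑ d ∈ F, ∏ j, d j ^ (a j : ℕ)
      = ∑ d ∈ signCube ℚ n, (if d ∈ F then 1 else 0) * ∏ j, d j ^ (a j : ℕ) := by
        simp_rw [ite_mul, one_mul, zero_mul]
        rw [← sum_filter, filter_mem_eq_inter, inter_eq_right.2 hFcube]
    _ = ∑ d ∈ signCube ℚ n, ∑ b, θ b * ((∏ j, d j ^ (b j : ℕ)) * ∏ j, d j ^ (a j : ℕ)) := by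
        refine sum_congr rfl fun d hd => ?_
        rw [← hθ d (mem_signCube.1 hd), eval_tlPoly, sum_mul]
        simp_rw [mul_assoc]
    _ = 2 ^ n * θ a := by
        rw [sum_comm]
        simp_rw [← mul_sum, sum_signCube_monomial_mul_monomial (by norm_num : (-1 : ℚ) ≠ 1),
          mul_ite, mul_zero, sum_ite_eq', mem_univ, if_true, mul_comm]

def indicatorExponent {n : ℕ} (S : Finset (Fin n)) : Fin n → Fin 2 :=
  fun i => if i ∈ S then 1 else 0

theorem sum_indicatorExponent {n : ℕ} (S : Finset (Fin n)) :
    ∑ i, (indicatorExponent S i : ℕ) = #S := by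
  simp [indicatorExponent, apply_ite]

theorem prod_pow_indicatorExponent {M : Type*} [CommMonoid M] {n : ℕ} (S : Finset (Fin n))
    (d : Fin n → M) : ∏ i, d i ^ (indicatorExponent S i : ℕ) = ∏ i ∈ S, d i := by
  simp [indicatorExponent, apply_ite, prod_ite_mem]

section Count

variable {R : Type*} [CommRing R] [CharZero R] [DecidableEq R]

theorem one_add_mul_mul_one_add_mul_eq_ite {x y ε δ : R} (hx : x = -1 ∨ x = 1)
    (hy : y = -1 ∨ y = 1) (hε : ε = -1 ∨ ε = 1) (hδ : δ = -1 ∨ δ = 1) :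
    (1 + ε * x) * (1 + δ * y) = if x = ε ∧ y = δ then 4 else 0 := by
  rcases hx with rfl | rfl <;> rcases hy with rfl | rfl <;> rcases hε with rfl | rfl <;>
    rcases hδ with rfl | rfl <;> norm_num

theorem four_mul_card_filter_eq_card {ι : Type*} {F : Finset (ι → R)}
    (hF : ∀ d ∈ F, ∀ j, d j = -1 ∨ d j = 1) {j k : ι}
    (hj : ∑ d ∈ F, d j = 0) (hk : ∑ d ∈ F, d k = 0) (hjk : ∑ d ∈ F, d j * d k = 0)
    {ε δ : R} (hε : ε = -1 ∨ ε = 1) (hδ : δ = -1 ∨ δ = 1) :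
    4 * #(F.filter fun d => d j = ε ∧ d k = δ) = #F := by
  have pointwise : ∑ d ∈ F, (1 + ε * d j) * (1 + δ * d k) =
      ∑ d ∈ F, if d j = ε ∧ d k = δ then 4 else 0 :=
    sum_congr rfl fun d hd => one_add_mul_mul_one_add_mul_eq_ite (hF d hd j) (hF d hd k) hε hδ
  have expand : ∑ d ∈ F, (1 + ε * d j) * (1 + δ * d k) = #F := by
    simp_rw [add_mul, mul_add, one_mul, mul_one, sum_add_distrib, mul_mul_mul_comm, ← mul_sum,
      hj, hk, hjk, mul_zero, add_zero, sum_const, nsmul_one]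
  rw [← sum_filter, sum_const, nsmul_eq_mul, mul_comm] at pointwise
  exact_mod_cast pointwise.symm.trans expand

end Count

theorem strength_two_of_low_coeffs_vanish_general (n : ℕ)
    (F : Finset (Fin n → ℚ))
    (hF : ∀ d ∈ F, ∀ j, d j = -1 ∨ d j = 1)
    (θ : (Fin n → Fin 2) → ℚ)
    (hθ : ∀ d : Fin n → ℚ, (∀ j, d j = -1 ∨ d j = 1) →
      eval d (tlPoly n θ) = if d ∈ F then 1 else 0)
    (hzero : ∀ a : Fin n → Fin 2,
      1 ≤ ∑ j, (a j : ℕ) → (∑ j, (a j : ℕ)) ≤ 2 → θ a = 0) :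
    ∀ j k : Fin n, j ≠ k → ∀ ε δ : ℚ, (ε = -1 ∨ ε = 1) → (δ = -1 ∨ δ = 1) →
      4 * (F.filter fun d => d j = ε ∧ d k = δ).card = F.card := by
  intro j k hjk ε δ hε hδ
  have low_moment : ∀ S : Finset (Fin n), 1 ≤ #S → #S ≤ 2 → ∑ d ∈ F, ∏ i ∈ S, d i = 0 := by
    intro S h1 h2
    simp_rw [← prod_pow_indicatorExponent S]
    rw [sum_monomial_eq_two_pow_mul F hF θ hθ,
      hzero _ (by rwa [sum_indicatorExponent]) (by rwa [sum_indicatorExponent]), mul_zero]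
  refine four_mul_card_filter_eq_card hF ?_ ?_ ?_ hε hδ
  · simpa using low_moment {j} (by simp) (by simp)
  · simpa using low_moment {k} (by simp) (by simp)
  · simpa [prod_pair hjk] using low_moment {j, k} (by simp) (card_pair hjk).le

/-- If all degree-1 and degree-2 coefficients of the indicator function of `F ⊆ {-1,1}ⁿ`
vanish, then `F` is an orthogonal design of strength 2: for every pair of distinct factors,
each of the four level combinations appears in exactly `|F|/4` points of `F`. -/
theorem strength_two_of_low_coeffs_vanish (n : ℕ) (hn : 2 ≤ n)
    (F : Finset (Fin n → ℚ))
    (hF : ∀ d ∈ F, ∀ j, d j = -1 ∨ d j = 1)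
    (θ : (Fin n → Fin 2) → ℚ)
    (hθ : ∀ d : Fin n → ℚ, (∀ j, d j = -1 ∨ d j = 1) →
      eval d (tlPoly n θ) = if d ∈ F then 1 else 0)
    (hzero : ∀ a : Fin n → Fin 2,
      1 ≤ ∑ j, (a j : ℕ) → (∑ j, (a j : ℕ)) ≤ 2 → θ a = 0) :
    ∀ j k : Fin n, j ≠ k → ∀ ε δ : ℚ, (ε = -1 ∨ ε = 1) → (δ = -1 ∨ δ = 1) →
      4 * (F.filter fun d => d j = ε ∧ d k = δ).card = F.card :=
  strength_two_of_low_coeffs_vanish_general n F hF θ hθ hzero
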